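/- arXiv:2101.06501 — 4 statements merged into one kernel-verified Lean document; each statement's English description precedes it below -/
import Mathlib

section
/- If the field F has more than two elements (possibly infinite), then no block filter on E is an ultrafilter: for every block filter F on E there exists A ⊆ E∖{0} such that A ∉ F and (E∖{0})∖A ∉ F. -/
namespace BlockPaper

variable {F : Type} [Field F]

/-- `X` is an infinite block sequence in `E = ⊕ₙ F`. -/
def IsBlock (X : ℕ → (ℕ →₀ F)) : Prop :=
  (∀ n, X n ≠ 0) ∧ ∀ n, ∀ i ∈ (X n).support, ∀ j ∈ (X (n + 1)).support, i < j

/-- `⟨X⟩`: the linear span of the entries of `X`, with `0` removed. -/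
def spanSet (X : ℕ → (ℕ →₀ F)) : Set (ℕ →₀ F) :=
  {v | v ≠ 0 ∧ v ∈ Submodule.span F (Set.range X)}

/-- `⟨X/n⟩`: the span (minus `0`) of the entries of `X` whose supports lie entirely above `n`. -/
def tailSpanSet (X : ℕ → (ℕ →₀ F)) (n : ℕ) : Set (ℕ →₀ F) :=
  {v | v ≠ 0 ∧ v ∈ Submodule.span F {x : ℕ →₀ F | (∃ k, X k = x) ∧ ∀ i ∈ x.support, n < i}}

/-- `X ⪯ Y`. -/
def PLE (X Y : ℕ → (ℕ →₀ F)) : Prop := spanSet X ⊆ spanSet Y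

/-- `X ⪯* Y`. -/
def PLEs (X Y : ℕ → (ℕ →₀ F)) : Prop := ∃ n, tailSpanSet X n ⊆ spanSet Y

/-- A block filter on `E`: a proper filter of subsets of `E ∖ {0}` containing all
finite-codimensional subspaces (minus `0`) and with a base of sets `⟨X⟩`, `X ∈ E^[∞]`. -/
structure BlockFilter (F : Type) [Field F] where
  sets : Set (Set (ℕ →₀ F))
  nonzero : ∀ S ∈ sets, ∀ v ∈ S, v ≠ 0
  proper : ∅ ∉ sets
  upward : ∀ S ∈ sets, ∀ T : Set (ℕ →₀ F), (∀ v ∈ T, v ≠ 0) → S ⊆ T → T ∈ sets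
  inter : ∀ S ∈ sets, ∀ T ∈ sets, S ∩ T ∈ sets
  codim : ∀ V : Submodule F (ℕ →₀ F), Module.Finite F ((ℕ →₀ F) ⧸ V) →
    {v : ℕ →₀ F | v ≠ 0 ∧ v ∈ V} ∈ sets
  blockBase : ∀ S ∈ sets, ∃ X : ℕ → (ℕ →₀ F),
    IsBlock X ∧ spanSet X ∈ sets ∧ spanSet X ⊆ S

/-- `D ⊆ E` is `𝓕`-dense. -/
def FDense (𝓕 : BlockFilter F) (D : Set (ℕ →₀ F)) : Prop :=
  ∀ X : ℕ → (ℕ →₀ F), IsBlock X → spanSet X ∈ 𝓕.sets →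
    ∃ V : Submodule F (ℕ →₀ F), ¬ Module.Finite F V ∧
      (V : Set (ℕ →₀ F)) \ {0} ⊆ spanSet X ∩ D

/-- `𝓕` is full: every `𝓕`-dense set belongs to `𝓕`. -/
def Full (𝓕 : BlockFilter F) : Prop :=
  ∀ D : Set (ℕ →₀ F), FDense 𝓕 D → D \ {0} ∈ 𝓕.sets

/-- `𝓕` is a `(p)`-filter. -/
def PFilter (𝓕 : BlockFilter F) : Prop :=
  ∀ Xs : ℕ → ℕ → (ℕ →₀ F), (∀ n, IsBlock (Xs n) ∧ spanSet (Xs n) ∈ 𝓕.sets) →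
    ∃ X : ℕ → (ℕ →₀ F), IsBlock X ∧ spanSet X ∈ 𝓕.sets ∧ ∀ n, PLEs X (Xs n)

/-- `𝓕` is a `(p⁺)`-filter: full and a `(p)`-filter. -/
def PPlus (𝓕 : BlockFilter F) : Prop := Full 𝓕 ∧ PFilter 𝓕

/-- A finite block sequence in `E`, as a list. -/
def IsBlockList (l : List (ℕ →₀ F)) : Prop :=
  (∀ v ∈ l, v ≠ 0) ∧
    l.Chain' (fun u v : ℕ →₀ F => ∀ i ∈ u.support, ∀ j ∈ v.support, i < j)

/-- `𝓕` is a strong `(p)`-filter: any family `(X_x⃗)` indexed by finite block sequences,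
with each `⟨X_x⃗⟩ ∈ 𝓕`, has a diagonalization `X` with `X/x⃗ ⪯ X_x⃗` for all finite initial
segments `x⃗` of `X`. -/
def StrongP (𝓕 : BlockFilter F) : Prop :=
  ∀ Xs : List (ℕ →₀ F) → ℕ → (ℕ →₀ F),
    (∀ l, IsBlockList l → IsBlock (Xs l) ∧ spanSet (Xs l) ∈ 𝓕.sets) →
    ∃ X : ℕ → (ℕ →₀ F), IsBlock X ∧ spanSet X ∈ 𝓕.sets ∧
      ∀ k : ℕ, PLE (fun m => X (m + k)) (Xs (List.ofFn fun i : Fin k => X i))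

/-- The outcome of a strategy (for II) against a sequence of opposing moves:
the `k`-th value is the strategy applied to the first `k+1` opposing moves. -/
def outcomeOf {α β : Type*} (st : List α → β) (Ys : ℕ → α) : ℕ → β :=
  fun k => st (List.ofFn fun i : Fin (k + 1) => Ys i)

/-- A legal move for player I in the Gowers game `G[X]`. -/
def LegalG (X Y : ℕ → (ℕ →₀ F)) : Prop := IsBlock Y ∧ PLE Y X

/-- A legal move for player I in the restricted Gowers game `G_𝓕[X]`. -/
def LegalGF (𝓕 : BlockFilter F) (X Y : ℕ → (ℕ →₀ F)) : Prop :=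
  IsBlock Y ∧ PLE Y X ∧ spanSet Y ∈ 𝓕.sets

/-- `α` is a strategy for player II in a Gowers-type game whose legal moves for I are
given by `legal`: against any sequence of legal I-moves, the outcome is a block
sequence whose `k`-th entry lies in the span of I's `k`-th move. -/
def IsStratII (legal : (ℕ → (ℕ →₀ F)) → Prop)
    (α : List (ℕ → (ℕ →₀ F)) → (ℕ →₀ F)) : Prop :=
  ∀ Ys : ℕ → ℕ → (ℕ →₀ F), (∀ k, legal (Ys k)) →
    IsBlock (outcomeOf α Ys) ∧ ∀ k, outcomeOf α Ys k ∈ spanSet (Ys k)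

/-- `𝓕` is strategic. -/
def Strategic (𝓕 : BlockFilter F) : Prop :=
  ∀ X : ℕ → (ℕ →₀ F), IsBlock X → spanSet X ∈ 𝓕.sets →
    ∀ α, IsStratII (LegalG X) α →
      ∃ Ys : ℕ → ℕ → (ℕ →₀ F), (∀ k, LegalG X (Ys k)) ∧
        spanSet (outcomeOf α Ys) ∈ 𝓕.sets

/-- `𝓕` is `+`-strategic. -/
def PlusStrategic (𝓕 : BlockFilter F) : Prop :=
  ∀ X : ℕ → (ℕ →₀ F), IsBlock X → spanSet X ∈ 𝓕.sets →
    ∀ α, IsStratII (LegalGF 𝓕 X) α →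
      ∃ Ys : ℕ → ℕ → (ℕ →₀ F), (∀ k, LegalGF 𝓕 X (Ys k)) ∧
        spanSet (outcomeOf α Ys) ∈ 𝓕.sets

/-- A legal finite position (list of II's moves so far) in a play where I follows `σ`. -/
def LegalPos (σ : List (ℕ →₀ F) → ℕ → (ℕ →₀ F)) (l : List (ℕ →₀ F)) : Prop :=
  IsBlockList l ∧ ∀ k, (h : k < l.length) → l.get ⟨k, h⟩ ∈ spanSet (σ (l.take k))

/-- `σ` is a strategy for player I in the restricted Gowers game `G_𝓕[X]`. -/
def IsStratIGF (𝓕 : BlockFilter F) (X : ℕ → (ℕ →₀ F))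
    (σ : List (ℕ →₀ F) → ℕ → (ℕ →₀ F)) : Prop :=
  ∀ l, LegalPos σ l → LegalGF 𝓕 X (σ l)

/-- `ys` is (the sequence of II's moves of) an infinite play against I's strategy `σ`
in a Gowers-type game; its outcome is `ys` itself. -/
def PlayAgainstI (σ : List (ℕ →₀ F) → ℕ → (ℕ →₀ F)) (ys : ℕ → (ℕ →₀ F)) : Prop :=
  IsBlock ys ∧ ∀ k, ys k ∈ spanSet (σ (List.ofFn fun i : Fin k => ys i))

/-- `ys` is an infinite play against I's strategy `σ` in the asymptotic game `F[X]`. -/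
def PlayAgainstIAsymp (X : ℕ → (ℕ →₀ F)) (σ : List (ℕ →₀ F) → ℕ)
    (ys : ℕ → (ℕ →₀ F)) : Prop :=
  IsBlock ys ∧ ∀ k, ys k ∈ spanSet X ∧
    ∀ i ∈ (ys k).support, σ (List.ofFn fun j : Fin k => ys j) < i

/-- `FIN`: nonempty finite subsets of `ℕ`. -/
abbrev FIN := {s : Finset ℕ // s.Nonempty}

/-- An infinite block sequence in `FIN`. -/
def IsBlockF (A : ℕ → Finset ℕ) : Prop :=
  (∀ n, (A n).Nonempty) ∧ ∀ n, ∀ i ∈ A n, ∀ j ∈ A (n + 1), i < j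

/-- `⟨A⟩`: unions of finitely many (at least one) entries of `A`. -/
def finUnions (A : ℕ → Finset ℕ) : Set (Finset ℕ) :=
  {b | ∃ G : Finset ℕ, G.Nonempty ∧ b = G.sup A}

/-- `⟨A/n⟩`: unions of finitely many entries of `A` contained in `(n, ∞)`. -/
def finUnionsAbove (A : ℕ → Finset ℕ) (n : ℕ) : Set (Finset ℕ) :=
  {b | ∃ G : Finset ℕ, G.Nonempty ∧ (∀ k ∈ G, ∀ i ∈ A k, n < i) ∧ b = G.sup A}

/-- `A ⪯ B` in `FIN`. -/
def PLEF (A B : ℕ → Finset ℕ) : Prop := finUnions A ⊆ finUnions B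

/-- `A ⪯* B` in `FIN`. -/
def PLEsF (A B : ℕ → Finset ℕ) : Prop := ∃ n, finUnionsAbove A n ⊆ finUnions B

/-- Lift a set of finite subsets of `ℕ` to a set of elements of `FIN`. -/
def liftFIN (S : Set (Finset ℕ)) : Set FIN := {a | (a : Finset ℕ) ∈ S}

/-- `U` is an ordered-union ultrafilter on `FIN`. -/
def OrderedUnion (U : Ultrafilter FIN) : Prop :=
  ∀ S ∈ U, ∃ A : ℕ → Finset ℕ, IsBlockF A ∧
    liftFIN (finUnions A) ∈ U ∧ liftFIN (finUnions A) ⊆ S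

/-- `U` is stable. -/
def Stable (U : Ultrafilter FIN) : Prop :=
  ∀ As : ℕ → ℕ → Finset ℕ, (∀ n, IsBlockF (As n) ∧ liftFIN (finUnions (As n)) ∈ U) →
    ∃ B : ℕ → Finset ℕ, IsBlockF B ∧ liftFIN (finUnions B) ∈ U ∧ ∀ n, PLEsF B (As n)

/-- `supp(X)`: the sequence of supports of the entries of `X`. -/
def suppSeq (X : ℕ → (ℕ →₀ F)) : ℕ → Finset ℕ := fun k => (X k).support

/-- `supp(𝓕)`: the collection of `A ⊆ FIN` containing `{supp v : v ∈ S}` for some `S ∈ 𝓕`. -/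
def suppFilter (𝓕 : BlockFilter F) : Set (Set FIN) :=
  {A | ∃ S ∈ 𝓕.sets, ∀ a : FIN, (∃ v ∈ S, (a : Finset ℕ) = v.support) → a ∈ A}

/-- A finite block sequence in `FIN`, as a list. -/
def IsBlockListF (l : List (Finset ℕ)) : Prop :=
  (∀ a ∈ l, a.Nonempty) ∧
    l.Chain' (fun a b : Finset ℕ => ∀ i ∈ a, ∀ j ∈ b, i < j)

/-- leading coefficient helper -/
noncomputable def leadC (v : ℕ →₀ F) : F := v (v.support.max.getD 0)

lemma leadC_ne_zero {v : ℕ →₀ F} (h : v ≠ 0) : leadC v ≠ 0 := by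
  have hne : v.support.Nonempty := Finsupp.support_nonempty_iff.mpr h
  obtain ⟨m, hm⟩ := Finset.max_of_nonempty hne
  have : v.support.max.getD 0 ∈ v.support := by
    rw [hm]; exact Finset.mem_of_max hm
  simpa [leadC] using Finsupp.mem_support_iff.mp this

lemma leadC_smul {c : F} (hc : c ≠ 0) (v : ℕ →₀ F) :
    leadC (c • v) = c * leadC v := by
  have hs : (c • v).support = v.support := Finsupp.support_smul_eq hc
  simp [leadC, hs, Finsupp.smul_apply]

lemma smul_mem_spanSet {X : ℕ → (ℕ →₀ F)} {v : ℕ →₀ F} {c : F} (hc : c ≠ 0)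
    (hv : v ∈ spanSet X) : c • v ∈ spanSet X :=
  ⟨smul_ne_zero hc hv.1, Submodule.smul_mem _ c hv.2⟩

lemma X0_mem_spanSet {X : ℕ → (ℕ →₀ F)} (hX : IsBlock X) : X 0 ∈ spanSet X :=
  ⟨hX.1 0, Submodule.subset_span ⟨0, rfl⟩⟩

end BlockPaper
open BlockPaper in
/-- If the field `F` has more than two elements, no block filter on `E` is an
ultrafilter of subsets of `E ∖ {0}`. -/
theorem stmt13 {F : Type} [Field F] [Countable F] (hF : 2 < Cardinal.mk F)
    (𝓕 : BlockFilter F) :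
    ∃ A : Set (ℕ →₀ F), (∀ v ∈ A, v ≠ 0) ∧ A ∉ 𝓕.sets ∧
      {v : ℕ →₀ F | v ≠ 0} \ A ∉ 𝓕.sets := by
  -- pick c ∉ {0, 1}
  obtain ⟨c, hc0, hc1⟩ : ∃ c : F, c ≠ 0 ∧ c ≠ 1 := by
    by_contra h
    push_neg at h
    have hsurj : Function.Surjective (fun b : Bool => if b then (1 : F) else 0) := by
      intro x
      rcases eq_or_ne x 0 with rfl | hx
      · exact ⟨false, rfl⟩
      · exact ⟨true, (h x hx).symm⟩
    have := Cardinal.mk_le_of_surjective hsurj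
    simp [Cardinal.mk_bool] at this
    exact absurd (lt_of_lt_of_le hF this) (lt_irrefl _)
  refine ⟨{v : ℕ →₀ F | v ≠ 0 ∧ leadC v = 1}, fun v hv => hv.1, ?_, ?_⟩
  · intro hA
    obtain ⟨X, hX, hXmem, hXsub⟩ := 𝓕.blockBase _ hA
    have h0 := X0_mem_spanSet hX
    set a := leadC (X 0) with ha
    have haz : a ≠ 0 := leadC_ne_zero (hX.1 0)
    have hcne : c * a⁻¹ ≠ 0 := mul_ne_zero hc0 (inv_ne_zero haz)
    have hw : (c * a⁻¹) • X 0 ∈ spanSet X := smul_mem_spanSet hcne h0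
    have := (hXsub hw).2
    rw [leadC_smul hcne] at this
    rw [mul_assoc, inv_mul_cancel₀ haz, mul_one] at this
    exact hc1 this
  · intro hA
    obtain ⟨X, hX, hXmem, hXsub⟩ := 𝓕.blockBase _ hA
    have h0 := X0_mem_spanSet hX
    set a := leadC (X 0) with ha
    have haz : a ≠ 0 := leadC_ne_zero (hX.1 0)
    have hw : a⁻¹ • X 0 ∈ spanSet X := smul_mem_spanSet (inv_ne_zero haz) h0
    have hlead : leadC (a⁻¹ • X 0) = 1 := by
      rw [leadC_smul (inv_ne_zero haz), inv_mul_cancel₀ haz]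
    exact (hXsub hw).2 ⟨hw.1, hlead⟩
end

section
/- Every (p+)-filter on E is spread. -/
open BlockPaper

/-- `𝓕` is spread: for every increasing sequence `I_0 < I_1 < ⋯` of nonempty finite
intervals in `ℕ` there is `⟨X⟩ ∈ 𝓕`, `X = (x_n)`, such that for every `n` there is `m`
with `I_0 < supp(x_n) < I_m < supp(x_{n+1})`. -/
def Spread {F : Type} [Field F] (𝓕 : BlockFilter F) : Prop :=
  ∀ I : ℕ → Finset ℕ, (∀ m, (I m).Nonempty) → (∀ m, ∃ a b, I m = Finset.Icc a b) →
    (∀ m, ∀ i ∈ I m, ∀ j ∈ I (m + 1), i < j) →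
    ∃ X : ℕ → (ℕ →₀ F), IsBlock X ∧ spanSet X ∈ 𝓕.sets ∧
      ∀ n, ∃ m, (∀ i ∈ I 0, ∀ j ∈ (X n).support, i < j) ∧
        (∀ j ∈ (X n).support, ∀ i ∈ I m, j < i) ∧
        (∀ i ∈ I m, ∀ j ∈ (X (n + 1)).support, i < j)

/-!
Let `ψ b = max I_{b+1}` and cut the support of a vector into clusters: a new cluster starts at
each element `x` with `ψ y < x` for all smaller elements `y` of the support. The set `D` of vectors
supported above `I_0` with an even number of clusters is dense: inside any block subspace one
builds a block sequence whose entries are pairwise `ψ`-far apart and have an even number of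
clusters each, and its infinite-dimensional span lies in `D`. By fullness some `⟨Z⟩ ∈ 𝓕` lies in `D`. If `supp z_{n+1}`
started within reach `ψ` of `max supp z_n`, then `z_n + z_{n+1}` would have one cluster fewer than
`z_n` and `z_{n+1}` together, so one of the three counts would be odd. Hence `I_m` with
`m = max supp z_n + 1` lies strictly between `supp z_n` and `supp z_{n+1}`.
-/

namespace BlockPaper

lemma rel_of_lt_of_forall_rel_succ {α : Type*} {r : α → α → Prop}
    (htrans : ∀ a b c, r a b → r b c → r a c) {S : ℕ → Finset α} (hne : ∀ n, (S n).Nonempty)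
    (hS : ∀ n, ∀ x ∈ S n, ∀ y ∈ S (n + 1), r x y) {m m' : ℕ} (hm : m < m') :
    ∀ x ∈ S m, ∀ y ∈ S m', r x y := by
  induction m', hm using Nat.le_induction with
  | base => exact hS m
  | succ k _ ih =>
    intro x hx y hy
    obtain ⟨z, hz⟩ := hne k
    exact htrans x z y (ih x hx z hz) (hS k z hz y hy)

namespace IsBlockF

variable {A : ℕ → Finset ℕ}

lemma lt_of_lt (hA : IsBlockF A) {m m' : ℕ} (hm : m < m') : ∀ i ∈ A m, ∀ j ∈ A m', i < j :=
  rel_of_lt_of_forall_rel_succ (r := (· < ·)) (fun _ _ _ => lt_trans) hA.1 hA.2 hm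

lemma disjoint (hA : IsBlockF A) {m m' : ℕ} (hm : m ≠ m') : Disjoint (A m) (A m') := by
  rcases hm.lt_or_gt with hm | hm
  · exact Finset.disjoint_left.2 fun i hi hi' => (hA.lt_of_lt hm i hi i hi').false
  · exact Finset.disjoint_right.2 fun i hi hi' => (hA.lt_of_lt hm i hi i hi').false

lemma strictMono_min' (hA : IsBlockF A) : StrictMono fun m => (A m).min' (hA.1 m) :=
  fun _ _ hm => hA.lt_of_lt hm _ (Finset.min'_mem _ _) _ (Finset.min'_mem _ _)

lemma strictMono_max' (hA : IsBlockF A) : StrictMono fun m => (A m).max' (hA.1 m) :=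
  fun _ _ hm => hA.lt_of_lt hm _ (Finset.max'_mem _ _) _ (Finset.max'_mem _ _)

lemma le_of_mem (hA : IsBlockF A) {m i : ℕ} (hi : i ∈ A m) : m ≤ i :=
  hA.strictMono_min'.le_apply.trans (Finset.min'_le _ _ hi)

end IsBlockF

section Clusters

variable {α : Type*} [LinearOrder α] (ψ : α → α)

/-- Call `x < y` in `s` linked when `y ≤ ψ x`; for monotone `ψ` the linked components are
intervals of `s`, and the heads are their least elements. -/
def clusterHeads (s : Finset α) : Finset α :=
  {x ∈ s | ∀ y ∈ s, y < x → ψ y < x}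

def clusterCount (s : Finset α) : ℕ := (clusterHeads ψ s).card

variable {ψ}

lemma disjoint_of_forall_lt (hψ : ∀ x, x < ψ x) {s t : Finset α}
    (hst : ∀ x ∈ s, ∀ y ∈ t, ψ x < y) : Disjoint s t :=
  Finset.disjoint_left.2 fun x hs ht => (hψ x).not_gt (hst x hs x ht)

lemma pairwise_disjoint_of_forall_lt (hψ : ∀ x, x < ψ x) {S : ℕ → Finset α}
    (hS : ∀ i j, i < j → ∀ x ∈ S i, ∀ y ∈ S j, ψ x < y) :
    Pairwise fun i j => Disjoint (S i) (S j) := by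
  intro i j hij
  rcases hij.lt_or_gt with hij | hij
  exacts [disjoint_of_forall_lt hψ (hS i j hij), (disjoint_of_forall_lt hψ (hS j i hij)).symm]

lemma clusterCount_union_of_forall_lt (hψ : ∀ x, x < ψ x) {s t : Finset α}
    (hst : ∀ x ∈ s, ∀ y ∈ t, ψ x < y) :
    clusterCount ψ (s ∪ t) = clusterCount ψ s + clusterCount ψ t := by
  have hlt : ∀ x ∈ s, ∀ y ∈ t, x < y := fun x hx y hy => (hψ x).trans (hst x hx y hy)
  have hheads : clusterHeads ψ (s ∪ t) = clusterHeads ψ s ∪ clusterHeads ψ t := by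
    ext x
    simp only [clusterHeads, Finset.mem_filter, Finset.mem_union]
    constructor
    · rintro ⟨hx | hx, hall⟩
      · exact Or.inl ⟨hx, fun y hy => hall y (Or.inl hy)⟩
      · exact Or.inr ⟨hx, fun y hy => hall y (Or.inr hy)⟩
    · rintro (⟨hx, hall⟩ | ⟨hx, hall⟩)
      · refine ⟨Or.inl hx, ?_⟩
        rintro y (hy | hy) hyx
        · exact hall y hy hyx
        · exact absurd hyx (hlt x hx y hy).not_gt
      · refine ⟨Or.inr hx, ?_⟩
        rintro y (hy | hy) hyx
        · exact hst y hy x hx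
        · exact hall y hy hyx
  have hdisj : Disjoint (clusterHeads ψ s) (clusterHeads ψ t) :=
    (disjoint_of_forall_lt hψ hst).mono (Finset.filter_subset _ _) (Finset.filter_subset _ _)
  rw [clusterCount, hheads, Finset.card_union_of_disjoint hdisj, clusterCount, clusterCount]

lemma min'_mem_clusterHeads {t : Finset α} (ht : t.Nonempty) : t.min' ht ∈ clusterHeads ψ t :=
  Finset.mem_filter.2 ⟨t.min'_mem ht, fun y hy hylt => absurd hylt (t.min'_le y hy).not_gt⟩

/-- The first cluster of `t` merges into the last one of `s`. -/
lemma clusterCount_union_add_one (hψ : Monotone ψ) {s t : Finset α} (hs : s.Nonempty)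
    (ht : t.Nonempty) (hlt : ∀ x ∈ s, ∀ y ∈ t, x < y) (hreach : t.min' ht ≤ ψ (s.max' hs)) :
    clusterCount ψ (s ∪ t) + 1 = clusterCount ψ s + clusterCount ψ t := by
  have hgap : s.max' hs < t.min' ht := hlt _ (s.max'_mem hs) _ (t.min'_mem ht)
  have hheads : clusterHeads ψ (s ∪ t) =
      clusterHeads ψ s ∪ (clusterHeads ψ t).erase (t.min' ht) := by
    ext x
    simp only [clusterHeads, Finset.mem_filter, Finset.mem_union, Finset.mem_erase]
    constructor
    · rintro ⟨hx | hx, hall⟩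
      · exact Or.inl ⟨hx, fun y hy => hall y (Or.inl hy)⟩
      · refine Or.inr ⟨?_, hx, fun y hy => hall y (Or.inr hy)⟩
        rintro rfl
        exact (hall _ (Or.inl (s.max'_mem hs)) hgap).not_ge hreach
    · rintro (⟨hx, hall⟩ | ⟨hxmin, hx, hall⟩)
      · refine ⟨Or.inl hx, ?_⟩
        rintro y (hy | hy) hyx
        · exact hall y hy hyx
        · exact absurd hyx (hlt x hx y hy).not_gt
      · refine ⟨Or.inr hx, ?_⟩
        rintro y (hy | hy) hyx
        · calc ψ y ≤ ψ (t.min' ht) := hψ ((s.le_max' y hy).trans hgap.le)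
            _ < x := hall _ (t.min'_mem ht) (lt_of_le_of_ne (t.min'_le x hx) (Ne.symm hxmin))
        · exact hall y hy hyx
  have hdisj : Disjoint (clusterHeads ψ s) ((clusterHeads ψ t).erase (t.min' ht)) :=
    Finset.disjoint_left.2 fun x hs ht' =>
      (hlt x (Finset.mem_filter.1 hs).1 x
        (Finset.mem_filter.1 (Finset.mem_of_mem_erase ht')).1).false
  have hpos : 0 < clusterCount ψ t := Finset.card_pos.2 ⟨_, min'_mem_clusterHeads ht⟩
  rw [clusterCount, hheads, Finset.card_union_of_disjoint hdisj,
    Finset.card_erase_of_mem (min'_mem_clusterHeads ht)]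
  unfold clusterCount at hpos ⊢
  omega

lemma clusterCount_biUnion (hψ : ∀ x, x < ψ x) {S : ℕ → Finset α}
    (hS : ∀ i j, i < j → ∀ x ∈ S i, ∀ y ∈ S j, ψ x < y) (G : Finset ℕ) :
    clusterCount ψ (G.biUnion S) = ∑ i ∈ G, clusterCount ψ (S i) := by
  induction G using Finset.induction_on_max with
  | empty => simp [clusterCount, clusterHeads]
  | insert a G ha ih =>
    have hsep : ∀ x ∈ G.biUnion S, ∀ y ∈ S a, ψ x < y := by
      intro x hx y hy
      obtain ⟨i, hi, hxi⟩ := Finset.mem_biUnion.1 hx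
      exact hS i a (ha i hi) x hxi y hy
    rw [Finset.biUnion_insert, Finset.union_comm, clusterCount_union_of_forall_lt hψ hsep, ih,
      Finset.sum_insert fun haG => (ha a haG).false, add_comm]

lemma forall_lt_of_even_clusterCount (hψ : Monotone ψ) {s t : Finset α} (hs : s.Nonempty)
    (ht : t.Nonempty) (hlt : ∀ x ∈ s, ∀ y ∈ t, x < y) (hs_even : Even (clusterCount ψ s))
    (ht_even : Even (clusterCount ψ t)) (hst_even : Even (clusterCount ψ (s ∪ t))) :
    ∀ y ∈ t, ψ (s.max' hs) < y := by
  by_contra! hreach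
  obtain ⟨y, hy, hyle⟩ := hreach
  have hmerge := clusterCount_union_add_one hψ hs ht hlt ((t.min'_le y hy).trans hyle)
  obtain ⟨p, hp⟩ := hs_even
  obtain ⟨q, hq⟩ := ht_even
  obtain ⟨r, hr⟩ := hst_even
  omega

end Clusters

section Spans

variable {ι α F : Type*} [Field F] [DecidableEq α]

lemma support_linearCombination_of_pairwise_disjoint {u : ι → (α →₀ F)}
    (hu : Pairwise fun i j => Disjoint (u i).support (u j).support) (c : ι →₀ F) :
    (Finsupp.linearCombination F u c).support = c.support.biUnion fun i => (u i).support := by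
  rw [Finsupp.linearCombination_apply, Finsupp.sum,
    Finsupp.support_sum_eq_biUnion _ fun i j hij =>
      (hu hij).mono Finsupp.support_smul Finsupp.support_smul]
  exact Finset.biUnion_congr rfl fun i hi =>
    Finsupp.support_smul_eq (Finsupp.mem_support_iff.1 hi)

lemma exists_support_eq_biUnion_of_mem_span {u : ι → (α →₀ F)}
    (hu : Pairwise fun i j => Disjoint (u i).support (u j).support) {v : α →₀ F}
    (hv : v ∈ Submodule.span F (Set.range u)) :
    ∃ G : Finset ι, v.support = G.biUnion fun i => (u i).support := by
  rw [← Finsupp.range_linearCombination] at hv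
  obtain ⟨c, rfl⟩ := hv
  exact ⟨c.support, support_linearCombination_of_pairwise_disjoint hu c⟩

lemma linearIndependent_of_pairwise_disjoint {u : ι → (α →₀ F)} (hu0 : ∀ i, u i ≠ 0)
    (hu : Pairwise fun i j => Disjoint (u i).support (u j).support) : LinearIndependent F u := by
  rw [linearIndependent_iff]
  intro c hc
  by_contra hc0
  obtain ⟨i, hi⟩ := Finsupp.support_nonempty_iff.2 hc0
  have hne : (c.support.biUnion fun i => (u i).support).Nonempty :=
    Finset.biUnion_nonempty.2 ⟨i, hi, Finsupp.support_nonempty_iff.2 (hu0 i)⟩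
  rw [← support_linearCombination_of_pairwise_disjoint hu c, hc] at hne
  exact Finset.not_nonempty_empty hne

lemma not_finite_span_of_pairwise_disjoint [Infinite ι] {u : ι → (α →₀ F)} (hu0 : ∀ i, u i ≠ 0)
    (hu : Pairwise fun i j => Disjoint (u i).support (u j).support) :
    ¬ Module.Finite F (Submodule.span F (Set.range u)) := fun _ =>
  Module.Finite.not_linearIndependent_of_infinite
    (fun i => (⟨u i, Submodule.subset_span ⟨i, rfl⟩⟩ : Submodule.span F (Set.range u)))
    (LinearIndependent.of_comp (Submodule.subtype _)
      (linearIndependent_of_pairwise_disjoint hu0 hu))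

end Spans

section Blocks

variable {F : Type} [Field F]

lemma IsBlock.isBlockF_suppSeq {X : ℕ → (ℕ →₀ F)} (hX : IsBlock X) : IsBlockF (suppSeq X) :=
  ⟨fun n => Finsupp.support_nonempty_iff.2 (hX.1 n), hX.2⟩

lemma IsBlock.pairwise_disjoint_support {X : ℕ → (ℕ →₀ F)} (hX : IsBlock X) :
    Pairwise fun i j => Disjoint (X i).support (X j).support :=
  fun _ _ hij => hX.isBlockF_suppSeq.disjoint hij

lemma IsBlock.support_add_succ {X : ℕ → (ℕ →₀ F)} (hX : IsBlock X) (n : ℕ) :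
    (X n + X (n + 1)).support = (X n).support ∪ (X (n + 1)).support :=
  Finsupp.support_add_eq (hX.pairwise_disjoint_support (Nat.lt_succ_self n).ne)

lemma IsBlock.mem_spanSet {X : ℕ → (ℕ →₀ F)} (hX : IsBlock X) (n : ℕ) : X n ∈ spanSet X :=
  ⟨hX.1 n, Submodule.subset_span ⟨n, rfl⟩⟩

lemma IsBlock.add_succ_mem_spanSet {X : ℕ → (ℕ →₀ F)} (hX : IsBlock X) (n : ℕ) :
    X n + X (n + 1) ∈ spanSet X := by
  refine ⟨?_, Submodule.add_mem _ (hX.mem_spanSet n).2 (hX.mem_spanSet (n + 1)).2⟩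
  rw [← Finsupp.support_nonempty_iff, hX.support_add_succ]
  exact (hX.isBlockF_suppSeq.1 n).mono Finset.subset_union_left

end Blocks

section EvenClusters

variable {F : Type} [Field F] {ψ : ℕ → ℕ}

def evenClusterSet (ψ : ℕ → ℕ) (t₀ : ℕ) : Set (ℕ →₀ F) :=
  {v | (∀ j ∈ v.support, t₀ < j) ∧ Even (clusterCount ψ v.support)}

/-- Of `x`, `y` and `x + y`, with `y` `ψ`-far above `x`, one has an even number of clusters. -/
lemma exists_mem_span_evenClusterSet (hψ : ∀ x, x < ψ x) {X : ℕ → (ℕ →₀ F)}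
    (hX : IsBlock X) (t : ℕ) :
    ∃ w ∈ Submodule.span F (Set.range X), w ≠ 0 ∧ w ∈ evenClusterSet ψ t := by
  have hXF := hX.isBlockF_suppSeq
  have hmem : ∀ k, X k ∈ Submodule.span F (Set.range X) := fun k =>
    Submodule.subset_span ⟨k, rfl⟩
  set x := X (t + 1)
  set y := X ((X (t + 1)).support.sup ψ + 1)
  have hx : ∀ j ∈ x.support, t < j := fun j hj => hXF.le_of_mem hj
  have hxy : ∀ i ∈ x.support, ∀ j ∈ y.support, ψ i < j := fun i hi j hj =>
    (Finset.le_sup hi).trans_lt (hXF.le_of_mem hj)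
  have hy : ∀ j ∈ y.support, t < j := by
    obtain ⟨i, hi⟩ := hXF.1 (t + 1)
    exact fun j hj => ((hx i hi).trans (hψ i)).trans (hxy i hi j hj)
  by_cases hx_even : Even (clusterCount ψ x.support)
  · exact ⟨x, hmem _, hX.1 _, hx, hx_even⟩
  by_cases hy_even : Even (clusterCount ψ y.support)
  · exact ⟨y, hmem _, hX.1 _, hy, hy_even⟩
  have hsupp : (x + y).support = x.support ∪ y.support :=
    Finsupp.support_add_eq (disjoint_of_forall_lt hψ hxy)
  refine ⟨x + y, Submodule.add_mem _ (hmem _) (hmem _), ?_, ?_, ?_⟩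
  · rw [← Finsupp.support_nonempty_iff, hsupp]
    exact (hXF.1 (t + 1)).mono Finset.subset_union_left
  · intro j hj
    rcases Finset.mem_union.1 (hsupp ▸ hj) with hj | hj
    exacts [hx j hj, hy j hj]
  · rw [hsupp, clusterCount_union_of_forall_lt hψ hxy]
    exact (Nat.not_even_iff_odd.1 hx_even).add_odd (Nat.not_even_iff_odd.1 hy_even)

lemma exists_separated_seq_evenClusterSet (hψ : ∀ x, x < ψ x) {X : ℕ → (ℕ →₀ F)}
    (hX : IsBlock X) (t₀ : ℕ) :
    ∃ g : ℕ → (ℕ →₀ F), (∀ n, g n ≠ 0) ∧ (∀ n, g n ∈ Submodule.span F (Set.range X)) ∧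
      (∀ n, g n ∈ evenClusterSet ψ t₀) ∧
      ∀ m m', m < m' → ∀ x ∈ (g m).support, ∀ y ∈ (g m').support, ψ x < y := by
  choose f hfX hf0 hfD using exists_mem_span_evenClusterSet (F := F) hψ hX
  let g : ℕ → (ℕ →₀ F) := fun n => Nat.rec (f t₀) (fun _ w => f (w.support.sup ψ)) n
  have hg : ∀ n, ∃ t, g n = f t := fun n => by cases n <;> exact ⟨_, rfl⟩
  have hg0 : ∀ n, g n ≠ 0 := fun n => by obtain ⟨t, ht⟩ := hg n; exact ht ▸ hf0 t
  have hsep : ∀ m m', m < m' → ∀ x ∈ (g m).support, ∀ y ∈ (g m').support, ψ x < y := by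
    refine fun m m' => rel_of_lt_of_forall_rel_succ (r := fun x y => ψ x < y)
      (fun a b c hab hbc => hab.trans ((hψ b).trans hbc))
      (fun n => Finsupp.support_nonempty_iff.2 (hg0 n)) ?_
    exact fun n x hx y hy => (Finset.le_sup hx).trans_lt ((hfD _).1 y hy)
  refine ⟨g, hg0, fun n => ?_, fun n => ⟨?_, ?_⟩, hsep⟩
  · obtain ⟨t, ht⟩ := hg n
    exact ht ▸ hfX t
  · rcases n with _ | n
    · exact (hfD t₀).1
    · obtain ⟨x, hx⟩ := Finsupp.support_nonempty_iff.2 (hg0 0)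
      exact fun y hy =>
        ((hfD t₀).1 x hx).trans ((hψ x).trans (hsep 0 (n + 1) n.succ_pos x hx y hy))
  · obtain ⟨t, ht⟩ := hg n
    exact ht ▸ (hfD t).2

lemma span_subset_evenClusterSet (hψ : ∀ x, x < ψ x) {t₀ : ℕ} {g : ℕ → (ℕ →₀ F)}
    (hgD : ∀ n, g n ∈ evenClusterSet ψ t₀)
    (hsep : ∀ m m', m < m' → ∀ x ∈ (g m).support, ∀ y ∈ (g m').support, ψ x < y) :
    (Submodule.span F (Set.range g) : Set (ℕ →₀ F)) ⊆ evenClusterSet ψ t₀ := by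
  intro v hv
  obtain ⟨G, hsupp⟩ := exists_support_eq_biUnion_of_mem_span
    (pairwise_disjoint_of_forall_lt hψ hsep) hv
  refine ⟨fun j hj => ?_, ?_⟩
  · obtain ⟨k, -, hjk⟩ := Finset.mem_biUnion.1 (hsupp ▸ hj)
    exact (hgD k).1 j hjk
  · rw [hsupp, clusterCount_biUnion hψ hsep]
    exact Finset.even_sum _ fun k _ => (hgD k).2

lemma fDense_evenClusterSet (𝓕 : BlockFilter F) (hψ : ∀ x, x < ψ x) (t₀ : ℕ) :
    FDense 𝓕 (evenClusterSet ψ t₀) := by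
  intro X hX _
  obtain ⟨g, hg0, hgX, hgD, hsep⟩ := exists_separated_seq_evenClusterSet hψ hX t₀
  refine ⟨Submodule.span F (Set.range g), not_finite_span_of_pairwise_disjoint hg0
    (pairwise_disjoint_of_forall_lt hψ hsep), ?_⟩
  intro v hv
  refine ⟨⟨hv.2, Submodule.span_le.2 ?_ hv.1⟩, span_subset_evenClusterSet hψ hgD hsep hv.1⟩
  rintro _ ⟨n, rfl⟩
  exact hgX n

lemma IsBlock.forall_lt_of_spanSet_subset (hψ : Monotone ψ) {Z : ℕ → (ℕ →₀ F)} (hZ : IsBlock Z)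
    {t₀ : ℕ} (hZD : spanSet Z ⊆ evenClusterSet ψ t₀) (n : ℕ) :
    ∀ y ∈ (Z (n + 1)).support, ψ ((Z n).support.max' (hZ.isBlockF_suppSeq.1 n)) < y := by
  have hsum := (hZD (hZ.add_succ_mem_spanSet n)).2
  rw [hZ.support_add_succ] at hsum
  exact forall_lt_of_even_clusterCount hψ _ (hZ.isBlockF_suppSeq.1 _) (hZ.2 n)
    (hZD (hZ.mem_spanSet n)).2 (hZD (hZ.mem_spanSet (n + 1))).2 hsum

end EvenClusters

end BlockPaper

theorem stmt15_general {F : Type} [Field F] (𝓕 : BlockFilter F)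
    (h : PPlus 𝓕) : Spread 𝓕 := by
  intro I hIne _ hIord
  have hI : IsBlockF I := ⟨hIne, hIord⟩
  let ψ : ℕ → ℕ := fun b => (I (b + 1)).max' (hIne _)
  have hψ : ∀ b, b < ψ b := fun b => hI.le_of_mem (Finset.max'_mem _ _)
  have hψ_mono : Monotone ψ := fun a b hab => hI.strictMono_max'.monotone (Nat.succ_le_succ hab)
  obtain ⟨Z, hZ, hZ𝓕, hZD⟩ :=
    𝓕.blockBase _ (h.1 _ (fDense_evenClusterSet 𝓕 hψ ((I 0).max' (hIne 0))))
  replace hZD := hZD.trans Set.sdiff_subset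
  refine ⟨Z, hZ, hZ𝓕, fun n => ⟨(Z n).support.max' (hZ.isBlockF_suppSeq.1 n) + 1, ?_, ?_, ?_⟩⟩
  · exact fun i hi j hj => ((I 0).le_max' i hi).trans_lt ((hZD (hZ.mem_spanSet n)).1 j hj)
  · exact fun j hj i hi => ((Z n).support.le_max' j hj).trans_lt (hI.le_of_mem hi)
  · exact fun i hi j hj =>
      ((I _).le_max' i hi).trans_lt (hZ.forall_lt_of_spanSet_subset hψ_mono hZD n j hj)

/-- Every `(p⁺)`-filter on `E` is spread. -/
theorem stmt15 {F : Type} [Field F] [Countable F] (𝓕 : BlockFilter F)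
    (h : PPlus 𝓕) : Spread 𝓕 :=
  stmt15_general 𝓕 h
end

section
/- Let U be an ultrafilter on ℕ. The following are equivalent: (i) U is a q-point; (ii) for every sequence I_0 < I_1 < I_2 < ⋯ of nonempty finite subsets of ℕ there is x ∈ U with |x ∩ I_m| ≤ 1 for all m; (iii) U is spread. -/
open BlockPaper

/-- `U` is a q-point: for every partition of `ℕ` into finite sets there is `x ∈ U`
meeting each piece in at most one point. -/
def QPoint (U : Ultrafilter ℕ) : Prop :=
  ∀ I : ℕ → Finset ℕ, (∀ m n, m ≠ n → Disjoint (I m) (I n)) → (∀ k, ∃ m, k ∈ I m) →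
    ∃ x ∈ U, ∀ m, (x ∩ (I m : Set ℕ)).Subsingleton

/-- The q-point property for increasing sequences of nonempty finite sets
`I_0 < I_1 < ⋯`. -/
def QPointSeq (U : Ultrafilter ℕ) : Prop :=
  ∀ I : ℕ → Finset ℕ, (∀ m, (I m).Nonempty) → (∀ m, ∀ i ∈ I m, ∀ j ∈ I (m + 1), i < j) →
    ∃ x ∈ U, ∀ m, (x ∩ (I m : Set ℕ)).Subsingleton

/-- `U` is spread: for every increasing sequence `I_0 < I_1 < ⋯` of nonempty finite
intervals there is `x ∈ U` such that any two consecutive elements `a < b` of `x`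
satisfy `I_0 < a`, `a < I_m` and `I_m < b` for some `m`. -/
def SpreadU (U : Ultrafilter ℕ) : Prop :=
  ∀ I : ℕ → Finset ℕ, (∀ m, (I m).Nonempty) → (∀ m, ∃ a b, I m = Finset.Icc a b) →
    (∀ m, ∀ i ∈ I m, ∀ j ∈ I (m + 1), i < j) →
    ∃ x ∈ U, ∀ a ∈ x, ∀ b ∈ x, a < b → (∀ c ∈ x, c ≤ a ∨ b ≤ c) →
      ∃ m, (∀ i ∈ I 0, i < a) ∧ (∀ i ∈ I m, a < i) ∧ (∀ i ∈ I m, i < b)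

private lemma blockLt {I : ℕ → Finset ℕ} (hne : ∀ m, (I m).Nonempty)
    (hadj : ∀ m, ∀ i ∈ I m, ∀ j ∈ I (m + 1), i < j) :
    ∀ m n, m < n → ∀ i ∈ I m, ∀ j ∈ I n, i < j := by
  intro m n hmn
  induction n with
  | zero => omega
  | succ n ih =>
    intro i hi j hj
    rcases Nat.lt_or_ge m n with h | h
    · obtain ⟨p, hp⟩ := hne n
      exact (ih h i hi p hp).trans (hadj n p hp j hj)
    · have hm : m = n := by omega
      subst hm
      exact hadj m i hi j hj

private lemma blockDisj {I : ℕ → Finset ℕ} (hne : ∀ m, (I m).Nonempty)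
    (hadj : ∀ m, ∀ i ∈ I m, ∀ j ∈ I (m + 1), i < j) {m n : ℕ} (h : m ≠ n) :
    Disjoint (I m) (I n) := by
  rw [Finset.disjoint_left]
  intro a ham han
  rcases Nat.lt_or_ge m n with hlt | hge
  · exact absurd (blockLt hne hadj m n hlt a ham a han) (lt_irrefl a)
  · have : n < m := by omega
    exact absurd (blockLt hne hadj n m this a han a ham) (lt_irrefl a)

private lemma nat_le_of_strictMono {t : ℕ → ℕ} (ht : StrictMono t) : ∀ n, n ≤ t n := by
  intro n
  induction n with
  | zero => exact Nat.zero_le _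
  | succ n ih => exact Nat.succ_le_of_lt (lt_of_le_of_lt ih (ht (Nat.lt_succ_self n)))

private lemma exists_interval_index {t : ℕ → ℕ} (ht : StrictMono t) (h0 : t 0 = 0) (a : ℕ) :
    ∃ k, t k ≤ a ∧ a < t (k + 1) := by
  classical
  have hex : ∃ k, a < t (k + 1) := ⟨a, by have := nat_le_of_strictMono ht (a + 1); omega⟩
  refine ⟨Nat.find hex, ?_, Nat.find_spec hex⟩
  rcases Nat.eq_zero_or_pos (Nat.find hex) with h | h
  · rw [h, h0]; exact Nat.zero_le a
  · have hmin := Nat.find_min hex (show Nat.find hex - 1 < Nat.find hex by omega)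
    have heq : Nat.find hex - 1 + 1 = Nat.find hex := by omega
    rw [heq] at hmin
    omega

private lemma keyLemma (U : Ultrafilter ℕ) (hq : QPointSeq U) {t : ℕ → ℕ}
    (ht : StrictMono t) :
    ∃ x ∈ U, ∀ k, (x ∩ ((Finset.Ico (t k) (t (k + 2)) : Finset ℕ) : Set ℕ)).Subsingleton := by
  obtain ⟨x1, hx1U, hx1⟩ := hq (fun m => Finset.Ico (t (2*m)) (t (2*m+2)))
    (fun m => Finset.nonempty_Ico.mpr (ht (by omega)))
    (fun m i hi j hj => by
      simp only [Finset.mem_Ico] at hi hj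
      have h2 : 2*(m+1) = 2*m+2 := by ring
      rw [h2] at hj
      omega)
  obtain ⟨x2, hx2U, hx2⟩ := hq (fun m => Finset.Ico (t (2*m+1)) (t (2*m+3)))
    (fun m => Finset.nonempty_Ico.mpr (ht (by omega)))
    (fun m i hi j hj => by
      simp only [Finset.mem_Ico] at hi hj
      have h2 : 2*(m+1)+1 = 2*m+3 := by ring
      rw [h2] at hj
      omega)
  refine ⟨x1 ∩ x2, Filter.inter_mem hx1U hx2U, ?_⟩
  intro k
  rcases Nat.even_or_odd k with ⟨m, hm⟩ | ⟨m, hm⟩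
  · have hk : k = 2*m := by omega
    subst hk
    exact (hx1 m).anti (fun y hy => ⟨hy.1.1, hy.2⟩)
  · have hk : k = 2*m+1 := by omega
    subst hk
    have h3 : 2*m+1+2 = 2*m+3 := by omega
    rw [h3]
    exact (hx2 m).anti (fun y hy => ⟨hy.1.2, hy.2⟩)

private lemma qpoint_to_seq {U : Ultrafilter ℕ} (h : QPoint U) : QPointSeq U := by
  intro I hne hadj
  classical
  set P : ℕ → Finset ℕ := fun n =>
    if n % 2 = 0 then I (n / 2)
    else if ∃ m, n / 2 ∈ I m then ∅ else {n / 2} with hP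
  have hPeven : ∀ m, m % 2 = 0 → P m = I (m / 2) := by
    intro m hm
    simp only [hP]
    rw [if_pos hm]
  have hPodd : ∀ m, m % 2 = 1 → P m = if ∃ k, m / 2 ∈ I k then ∅ else {m / 2} := by
    intro m hm
    simp only [hP]
    rw [if_neg (by omega)]
  have hsingle : ∀ m k, m % 2 = 1 → k ∈ P m → k = m / 2 ∧ ¬∃ l, k ∈ I l := by
    intro m k hm hk
    rw [hPodd m hm] at hk
    split_ifs at hk with h'
    · simp at hk
    · simp only [Finset.mem_singleton] at hk
      exact ⟨hk, hk ▸ h'⟩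
  have hdisj : ∀ m n, m ≠ n → Disjoint (P m) (P n) := by
    intro m n hmn
    rw [Finset.disjoint_left]
    intro k hkm hkn
    rcases Nat.mod_two_eq_zero_or_one m with hm | hm <;>
      rcases Nat.mod_two_eq_zero_or_one n with hn | hn
    · rw [hPeven m hm] at hkm
      rw [hPeven n hn] at hkn
      exact Finset.disjoint_left.mp
        (blockDisj hne hadj (show m / 2 ≠ n / 2 by omega)) hkm hkn
    · obtain ⟨-, hno⟩ := hsingle n k hn hkn
      rw [hPeven m hm] at hkm
      exact hno ⟨m / 2, hkm⟩
    · obtain ⟨-, hno⟩ := hsingle m k hm hkm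
      rw [hPeven n hn] at hkn
      exact hno ⟨n / 2, hkn⟩
    · obtain ⟨h1, -⟩ := hsingle m k hm hkm
      obtain ⟨h2, -⟩ := hsingle n k hn hkn
      omega
  have hcov : ∀ k, ∃ m, k ∈ P m := by
    intro k
    by_cases hk : ∃ m, k ∈ I m
    · obtain ⟨m, hm⟩ := hk
      refine ⟨2 * m, ?_⟩
      rw [hPeven (2 * m) (by omega)]
      have h2 : 2 * m / 2 = m := by omega
      rw [h2]
      exact hm
    · refine ⟨2 * k + 1, ?_⟩
      rw [hPodd (2 * k + 1) (by omega)]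
      have h2 : (2 * k + 1) / 2 = k := by omega
      rw [h2, if_neg hk]
      exact Finset.mem_singleton_self k
  obtain ⟨x, hxU, hx⟩ := h P hdisj hcov
  refine ⟨x, hxU, fun m => ?_⟩
  have hPm : P (2 * m) = I m := by
    rw [hPeven (2 * m) (by omega)]
    have h2 : 2 * m / 2 = m := by omega
    rw [h2]
  have := hx (2 * m)
  rwa [hPm] at this

private lemma seq_to_qpoint {U : Ultrafilter ℕ} (h : QPointSeq U) : QPoint U := by
  intro I hdisj hcov
  classical
  set g : ℕ → ℕ := fun j => (I (hcov j).choose).sup id + 1 with hg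
  set t : ℕ → ℕ := fun k =>
    Nat.rec 0 (fun _ tk => max (tk + 1) ((Finset.range tk).sup g)) k with htdef
  have ht0 : t 0 = 0 := rfl
  have htsucc : ∀ k, t (k + 1) = max (t k + 1) ((Finset.range (t k)).sup g) := fun k => rfl
  have htm : StrictMono t := strictMono_nat_of_lt_succ (fun k => by
    rw [htsucc k]; omega)
  have hstage : ∀ k m j, j ∈ I m → j < t k → ∀ i ∈ I m, i < t (k + 1) := by
    intro k m j hj hjk i hi
    have hm : m = (hcov j).choose := by
      by_contra hne'
      exact Finset.disjoint_left.mp (hdisj m _ hne') hj (hcov j).choose_spec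
    subst hm
    have h1 : i ≤ (I (hcov j).choose).sup id := Finset.le_sup (f := id) hi
    have h2 : g j ≤ (Finset.range (t k)).sup g :=
      Finset.le_sup (Finset.mem_range.mpr hjk)
    have h3 : g j = (I (hcov j).choose).sup id + 1 := rfl
    rw [htsucc k]
    omega
  obtain ⟨x, hxU, hx⟩ := keyLemma U h htm
  refine ⟨x, hxU, fun m => ?_⟩
  rcases (I m).eq_empty_or_nonempty with he | hnem
  · rw [he]; simp
  · obtain ⟨k, hk1, hk2⟩ := exists_interval_index htm ht0 ((I m).min' hnem)
    have hsub : (I m : Set ℕ) ⊆ ((Finset.Ico (t k) (t (k + 2)) : Finset ℕ) : Set ℕ) := by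
      intro i hi
      have hi' : i ∈ I m := hi
      have hlow : t k ≤ i := le_trans hk1 (Finset.min'_le _ _ hi')
      have hup : i < t (k + 2) :=
        hstage (k + 1) m ((I m).min' hnem) (Finset.min'_mem _ _) hk2 i hi'
      simp only [Finset.coe_Ico, Set.mem_Ico]
      exact ⟨hlow, hup⟩
    exact (hx k).anti (fun y hy => ⟨hy.1, hsub hy.2⟩)

private lemma qpoint_to_spread {U : Ultrafilter ℕ} (h : QPoint U) : SpreadU U := by
  intro I hne hIcc hadj
  classical
  have hq : QPointSeq U := qpoint_to_seq h
  set b : ℕ → ℕ := fun m => (I m).max' (hne m) with hb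
  by_cases hbU : Set.Iic (b 0) ∈ U
  · obtain ⟨p, hp, hUp⟩ := Ultrafilter.eq_pure_of_finite_mem (Set.finite_Iic _) hbU
    refine ⟨{p}, ?_, ?_⟩
    · rw [hUp]
      exact Ultrafilter.mem_pure.mpr rfl
    · intro a ha b' hb' hab _
      have ha' : a = p := ha
      have hb'' : b' = p := hb'
      omega
  · have hIoi : Set.Ioi (b 0) ∈ U := by
      have := Ultrafilter.compl_mem_iff_notMem.mpr hbU
      rwa [Set.compl_Iic] at this
    set t : ℕ → ℕ := fun k => Nat.rec 0 (fun k _ => b k + 1) k with htdef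
    have ht0 : t 0 = 0 := rfl
    have htsucc : ∀ k, t (k + 1) = b k + 1 := fun k => rfl
    have hbmono : ∀ k, b k < b (k + 1) :=
      fun k => hadj k (b k) (Finset.max'_mem _ _) (b (k + 1)) (Finset.max'_mem _ _)
    have htm : StrictMono t := strictMono_nat_of_lt_succ (fun k => by
      cases k with
      | zero => rw [ht0, htsucc]; omega
      | succ k => rw [htsucc, htsucc]; have := hbmono k; omega)
    obtain ⟨x, hxU, hx⟩ := keyLemma U hq htm
    refine ⟨x ∩ Set.Ioi (b 0), Filter.inter_mem hxU hIoi, ?_⟩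
    rintro a ⟨hax, hab0⟩ b' ⟨hb'x, _⟩ hab _
    obtain ⟨k, hk1, hk2⟩ := exists_interval_index htm ht0 a
    have hb'big : t (k + 2) ≤ b' := by
      by_contra hcon
      push_neg at hcon
      have hmem_a : a ∈ x ∩ ((Finset.Ico (t k) (t (k + 2)) : Finset ℕ) : Set ℕ) := by
        refine ⟨hax, ?_⟩
        simp only [Finset.coe_Ico, Set.mem_Ico]
        exact ⟨hk1, lt_of_lt_of_le hk2 (htm.monotone (Nat.le_succ (k + 1)))⟩
      have hmem_b : b' ∈ x ∩ ((Finset.Ico (t k) (t (k + 2)) : Finset ℕ) : Set ℕ) := by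
        refine ⟨hb'x, ?_⟩
        simp only [Finset.coe_Ico, Set.mem_Ico]
        exact ⟨by omega, hcon⟩
      have heq : a = b' := hx k hmem_a hmem_b
      omega
    refine ⟨k + 1, ?_, ?_, ?_⟩
    · intro i hi
      have : i ≤ b 0 := Finset.le_max' _ _ hi
      have : b 0 < a := hab0
      omega
    · intro i hi
      have h1 : b k < i := hadj k (b k) (Finset.max'_mem _ _) i hi
      have h2 : a < t (k + 1) := hk2
      rw [htsucc] at h2
      omega
    · intro i hi
      have h1 : i ≤ b (k + 1) := Finset.le_max' _ _ hi
      have h2 : t (k + 2) = b (k + 1) + 1 := htsucc (k + 1)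
      omega

private lemma spread_to_seq {U : Ultrafilter ℕ} (h : SpreadU U) : QPointSeq U := by
  intro I hne hadj
  classical
  set K : ℕ → Finset ℕ := fun m => Finset.Icc ((I m).min' (hne m)) ((I m).max' (hne m))
    with hK
  have hKne : ∀ m, (K m).Nonempty :=
    fun m => Finset.nonempty_Icc.mpr (Finset.min'_le _ _ (Finset.max'_mem _ _))
  have hKicc : ∀ m, ∃ a b, K m = Finset.Icc a b := fun m => ⟨_, _, rfl⟩
  have hKadj : ∀ m, ∀ i ∈ K m, ∀ j ∈ K (m + 1), i < j := by
    intro m i hi j hj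
    simp only [hK, Finset.mem_Icc] at hi hj
    have : (I m).max' (hne m) < (I (m + 1)).min' (hne (m + 1)) :=
      hadj m _ (Finset.max'_mem _ _) _ (Finset.min'_mem _ _)
    omega
  have hIK : ∀ m, ∀ i ∈ I m, i ∈ K m := by
    intro m i hi
    simp only [hK, Finset.mem_Icc]
    exact ⟨Finset.min'_le _ _ hi, Finset.le_max' _ _ hi⟩
  obtain ⟨x, hxU, hx⟩ := h K hKne hKicc hKadj
  refine ⟨x, hxU, fun m => ?_⟩
  have key : ∀ a b, a ∈ x → b ∈ x → a ∈ I m → b ∈ I m → a < b → False := by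
    intro a b hax hbx haI hbI hab
    have hexb : ∃ n, n ∈ x ∧ a < n := ⟨b, hbx, hab⟩
    obtain ⟨hb'x, hab'⟩ := Nat.find_spec hexb
    have hb'le : Nat.find hexb ≤ b := Nat.find_min' hexb ⟨hbx, hab⟩
    have hcons : ∀ c ∈ x, c ≤ a ∨ Nat.find hexb ≤ c := by
      intro c hc
      by_contra hcon
      push_neg at hcon
      exact Nat.find_min hexb (by omega) ⟨hc, by omega⟩
    obtain ⟨m', h0, hlo, hhi⟩ := hx a hax (Nat.find hexb) hb'x hab' hcons
    have haK : a ∈ K m := hIK m a haI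
    have hb'K : Nat.find hexb ∈ K m := by
      simp only [hK, Finset.mem_Icc]
      have h1 : (I m).min' (hne m) ≤ a := Finset.min'_le _ _ haI
      have h2 : b ≤ (I m).max' (hne m) := Finset.le_max' _ _ hbI
      omega
    rcases lt_trichotomy m' m with hlt | heq | hgt
    · obtain ⟨p, hp⟩ := hKne m'
      have h1 : p < a := blockLt hKne hKadj m' m hlt p hp a haK
      have h2 : a < p := hlo p hp
      omega
    · subst heq
      exact absurd (hlo a haK) (lt_irrefl a)
    · obtain ⟨p, hp⟩ := hKne m'
      have h1 : Nat.find hexb < p := blockLt hKne hKadj m m' hgt _ hb'K p hp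
      have h2 : p < Nat.find hexb := hhi p hp
      omega
  intro a ha b' hb'
  by_contra hab
  rcases Nat.lt_or_ge a b' with hlt | hge
  · exact key a b' ha.1 hb'.1 ha.2 hb'.2 hlt
  · exact key b' a hb'.1 ha.1 hb'.2 ha.2 (by omega)


/-- For an ultrafilter on `ℕ`: q-point ↔ the finite-sets variant ↔ spread. -/
theorem stmt17 (U : Ultrafilter ℕ) :
    (QPoint U ↔ QPointSeq U) ∧ (QPoint U ↔ SpreadU U) :=
  ⟨⟨fun h => qpoint_to_seq h, fun h => seq_to_qpoint h⟩,
   ⟨fun h => qpoint_to_spread h, fun h => seq_to_qpoint (spread_to_seq h)⟩⟩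
end

section
/- Let F be a block filter on E, ⟨X⟩ ∈ F, and α a strategy for player II in the restricted Gowers game G_F[X]. Then there is a tree T ⊆ E^[<∞] such that: (i) every infinite branch of T is an outcome of α (i.e., [T] ⊆ [α]); and (ii) whenever t ∈ T (including the empty sequence) and ⟨Y⟩ ∈ F, there is y ∈ ⟨Y⟩ such that the extension of t by y belongs to T. -/
/-!
For each position `L` of player I and each possible answer `y` of `α` to one more legal move,
fix one legal move of I provoking `y`. Replaying these choices assigns to every finite sequence
`l` of II-moves a canonical sequence of I-moves, and `T` is the set of `l` each of whose entries
is a possible answer of `α` after the canonical moves for the entries before it. The canonical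
moves of a prefix of `l` are a prefix of those of `l`, so every node of `T`, and every infinite
branch, is an initial part of the outcome of one play of `G_𝓕[X]` against `α`; in particular
nodes are block sequences. Given `⟨Y⟩ ∈ 𝓕`, a node is extended by the answer of `α` to a legal
move `Y'` with `⟨Y'⟩ ⊆ ⟨Y⟩ ∩ ⟨X⟩`.
-/

namespace BlockPaper

theorem ofFn_succ_eq_append {β : Type*} (f : ℕ → β) (n : ℕ) :
    (List.ofFn fun i : Fin (n + 1) => f i) = (List.ofFn fun i : Fin n => f i) ++ [f n] := by
  rw [List.ofFn_succ_last]
  simp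

theorem ofFn_getD_length {β : Type*} (L : List β) (d : β) :
    (List.ofFn fun i : Fin L.length => L.getD i d) = L := by
  apply List.ext_getElem <;> simp

section ResponseTree

variable {A B : Type*} (legal : A → Prop) (α : List A → B)

def IsResponse (L : List A) (y : B) : Prop := ∃ Y, legal Y ∧ α (L ++ [Y]) = y

variable [Nonempty A]

noncomputable def responseMove (L : List A) (y : B) : A :=
  Classical.epsilon fun Y => legal Y ∧ α (L ++ [Y]) = y

theorem responseMove_spec {L : List A} {y : B} (h : IsResponse legal α L y) :
    legal (responseMove legal α L y) ∧ α (L ++ [responseMove legal α L y]) = y :=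
  Classical.epsilon_spec h

noncomputable def responseMoves (l : List B) : List A :=
  l.foldl (fun L y => L ++ [responseMove legal α L y]) []

@[simp]
theorem responseMoves_nil : responseMoves legal α [] = [] := rfl

@[simp]
theorem responseMoves_append_singleton (l : List B) (y : B) :
    responseMoves legal α (l ++ [y]) =
      responseMoves legal α l ++ [responseMove legal α (responseMoves legal α l) y] := by
  simp [responseMoves, List.foldl_append]

@[simp]
theorem length_responseMoves (l : List B) : (responseMoves legal α l).length = l.length := by
  induction l using List.reverseRecOn <;> simp [*]

def responseTree : Set (List B) :=
  {l | ∀ j (h : j < l.length), IsResponse legal α (responseMoves legal α (l.take j)) l[j]}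

variable {legal α}

theorem nil_mem_responseTree : [] ∈ responseTree legal α := by
  simp [responseTree]

theorem mem_responseTree_of_prefix {l t : List B} (hl : l ∈ responseTree legal α)
    (ht : t <+: l) : t ∈ responseTree legal α := by
  obtain ⟨s, rfl⟩ := ht
  intro j hj
  have := hl j (by simp; omega)
  rwa [List.take_append_of_le_length hj.le, List.getElem_append_left hj] at this

theorem append_mem_responseTree_iff {l : List B} {y : B} :
    l ++ [y] ∈ responseTree legal α ↔
      l ∈ responseTree legal α ∧ IsResponse legal α (responseMoves legal α l) y := by
  constructor
  · intro h
    exact ⟨mem_responseTree_of_prefix h (List.prefix_append _ _), by simpa using h l.length⟩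
  · rintro ⟨hl, hy⟩ j hj
    rcases Nat.lt_succ_iff_lt_or_eq.1 (by simpa using hj) with hj | rfl
    · simpa [List.take_append_of_le_length hj.le, List.getElem_append_left hj] using hl j hj
    · simpa using hy

theorem append_mem_responseTree {l : List B} {d : A} (hl : l ∈ responseTree legal α)
    (hd : legal d) : l ++ [α (responseMoves legal α l ++ [d])] ∈ responseTree legal α :=
  append_mem_responseTree_iff.2 ⟨hl, d, hd, rfl⟩

theorem legal_of_mem_responseMoves {l : List B} (hl : l ∈ responseTree legal α) :
    ∀ Y ∈ responseMoves legal α l, legal Y := by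
  induction l using List.reverseRecOn with
  | nil => simp
  | append_singleton l y ih =>
    obtain ⟨hl, hy⟩ := append_mem_responseTree_iff.1 hl
    simpa [or_imp, forall_and, (responseMove_spec legal α hy).1] using ih hl

theorem ofFn_outcomeOf_of_mem {l : List B} (hl : l ∈ responseTree legal α) {Ys : ℕ → A}
    (hYs : (List.ofFn fun i : Fin l.length => Ys i) = responseMoves legal α l) :
    (List.ofFn fun i : Fin l.length => outcomeOf α Ys i) = l := by
  induction l using List.reverseRecOn with
  | nil => rfl
  | append_singleton l y ih =>
    obtain ⟨hl, hy⟩ := append_mem_responseTree_iff.1 hl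
    rw [List.length_append, List.length_singleton, ofFn_succ_eq_append] at hYs ⊢
    rw [responseMoves_append_singleton] at hYs
    obtain ⟨hYs, hlast⟩ := List.append_inj' hYs rfl
    rw [ih hl hYs, outcomeOf, ofFn_succ_eq_append, hYs, hlast, (responseMove_spec legal α hy).2]

theorem exists_play_through {l : List B} (hl : l ∈ responseTree legal α) {d : A}
    (hd : legal d) :
    ∃ Ys : ℕ → A, (∀ k, legal (Ys k)) ∧
      (List.ofFn fun i : Fin l.length => outcomeOf α Ys i) = l ∧ Ys l.length = d ∧
      outcomeOf α Ys l.length = α (responseMoves legal α l ++ [d]) := by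
  set L := responseMoves legal α l
  have hL : (List.ofFn fun i : Fin l.length => L.getD i d) = L := by
    simpa [L] using ofFn_getD_length L d
  have hLd : L.getD l.length d = d := List.getD_eq_default _ _ (by simp [L])
  refine ⟨fun k => L.getD k d, fun k => ?_, ofFn_outcomeOf_of_mem hl hL, hLd, ?_⟩
  · show legal (L.getD k d)
    rw [List.getD_eq_getElem?_getD]
    cases h : L[k]? with
    | none => exact hd
    | some Y => exact legal_of_mem_responseMoves hl Y (List.mem_of_getElem? h)
  · rw [outcomeOf, ofFn_succ_eq_append (fun k => L.getD k d), hL, hLd]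

theorem exists_play_of_forall_ofFn_mem {Z : ℕ → B}
    (hZ : ∀ k, (List.ofFn fun i : Fin k => Z i) ∈ responseTree legal α) :
    ∃ Ys : ℕ → A, (∀ k, legal (Ys k)) ∧ outcomeOf α Ys = Z := by
  set W : ℕ → List A := fun k => responseMoves legal α (List.ofFn fun i : Fin k => Z i)
  have hresp k : IsResponse legal α (W k) (Z k) :=
    (append_mem_responseTree_iff.1 (ofFn_succ_eq_append Z k ▸ hZ (k + 1))).2
  set Ys := fun k => responseMove legal α (W k) (Z k)
  have hYs k : (List.ofFn fun i : Fin k => Ys i) = W k := by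
    induction k with
    | zero => rfl
    | succ k ih =>
      rw [ofFn_succ_eq_append, ih]
      simp only [W, Ys, ofFn_succ_eq_append Z, responseMoves_append_singleton]
  refine ⟨Ys, fun k => (responseMove_spec legal α (hresp k)).1, funext fun k => ?_⟩
  rw [outcomeOf, ofFn_succ_eq_append, hYs, (responseMove_spec legal α (hresp k)).2]

end ResponseTree

variable {F : Type} [Field F]

theorem exists_legalGF_subset {𝓕 : BlockFilter F} {X : ℕ → (ℕ →₀ F)}
    (hXF : spanSet X ∈ 𝓕.sets) {S : Set (ℕ →₀ F)} (hS : S ∈ 𝓕.sets) :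
    ∃ Y, LegalGF 𝓕 X Y ∧ spanSet Y ⊆ S := by
  obtain ⟨Y, hY, hYF, hYS⟩ := 𝓕.blockBase _ (𝓕.inter _ hS _ hXF)
  exact ⟨Y, ⟨hY, fun _ hv => (hYS hv).2, hYF⟩, fun _ hv => (hYS hv).1⟩

theorem IsBlock.isBlockList_ofFn {Z : ℕ → (ℕ →₀ F)} (hZ : IsBlock Z) (n : ℕ) :
    IsBlockList (List.ofFn fun i : Fin n => Z i) := by
  refine ⟨?_, List.isChain_iff_getElem.2 fun i _ => ?_⟩
  · simp only [List.mem_ofFn]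
    rintro _ ⟨i, rfl⟩
    exact hZ.1 i
  · simpa using hZ.2 i

end BlockPaper

open BlockPaper in
theorem stmt18_general {F : Type} [Field F] (𝓕 : BlockFilter F)
    (X : ℕ → (ℕ →₀ F)) (hXF : spanSet X ∈ 𝓕.sets)
    (α : List (ℕ → (ℕ →₀ F)) → (ℕ →₀ F)) (hα : IsStratII (LegalGF 𝓕 X) α) :
    ∃ T : Set (List (ℕ →₀ F)),
      (∀ l ∈ T, IsBlockList l) ∧
      ([] ∈ T) ∧
      (∀ l ∈ T, ∀ t, t <+: l → t ∈ T) ∧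
      (∀ Z : ℕ → (ℕ →₀ F), (∀ k, (List.ofFn fun i : Fin k => Z i) ∈ T) →
        ∃ Ys : ℕ → ℕ → (ℕ →₀ F), (∀ k, LegalGF 𝓕 X (Ys k)) ∧ outcomeOf α Ys = Z) ∧
      (∀ l ∈ T, ∀ Y : ℕ → (ℕ →₀ F), IsBlock Y → spanSet Y ∈ 𝓕.sets →
        ∃ y ∈ spanSet Y, l ++ [y] ∈ T) := by
  refine ⟨responseTree (LegalGF 𝓕 X) α, fun l hl => ?_, nil_mem_responseTree,
    fun l hl t => mem_responseTree_of_prefix hl, fun Z => exists_play_of_forall_ofFn_mem,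
    fun l hl Y _ hYF => ?_⟩
  · obtain ⟨d, hd, -⟩ := exists_legalGF_subset hXF hXF
    obtain ⟨Ys, hYs, hl_eq, -, -⟩ := exists_play_through hl hd
    rw [← hl_eq]
    exact (hα Ys hYs).1.isBlockList_ofFn _
  · obtain ⟨d, hd, hdY⟩ := exists_legalGF_subset hXF hYF
    obtain ⟨Ys, hYs, -, hYd, hout⟩ := exists_play_through hl hd
    have hmem := (hα Ys hYs).2 l.length
    rw [hYd, hout] at hmem
    exact ⟨_, hdY hmem, append_mem_responseTree hl hd⟩

open BlockPaper in
/-- Given a block filter `𝓕`, `⟨X⟩ ∈ 𝓕` and a strategy `α` for II in `G_𝓕[X]`,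
there is a tree `T ⊆ E^[<∞]` all of whose branches are outcomes of `α` and such that
every node of `T` can be extended into `T` by a vector from any prescribed `⟨Y⟩ ∈ 𝓕`. -/
theorem stmt18 {F : Type} [Field F] [Countable F] (𝓕 : BlockFilter F)
    (X : ℕ → (ℕ →₀ F)) (hX : IsBlock X) (hXF : spanSet X ∈ 𝓕.sets)
    (α : List (ℕ → (ℕ →₀ F)) → (ℕ →₀ F)) (hα : IsStratII (LegalGF 𝓕 X) α) :
    ∃ T : Set (List (ℕ →₀ F)),
      (∀ l ∈ T, IsBlockList l) ∧
      ([] ∈ T) ∧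
      (∀ l ∈ T, ∀ t, t <+: l → t ∈ T) ∧
      (∀ Z : ℕ → (ℕ →₀ F), (∀ k, (List.ofFn fun i : Fin k => Z i) ∈ T) →
        ∃ Ys : ℕ → ℕ → (ℕ →₀ F), (∀ k, LegalGF 𝓕 X (Ys k)) ∧ outcomeOf α Ys = Z) ∧
      (∀ l ∈ T, ∀ Y : ℕ → (ℕ →₀ F), IsBlock Y → spanSet Y ∈ 𝓕.sets →
        ∃ y ∈ spanSet Y, l ++ [y] ∈ T) :=
  stmt18_general 𝓕 X hXF α hα
end
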